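/- Consider rooted trees whose internal nodes are labeled either 'v-type' or 'w-type', each internal node having 1 or 3 children, subject to: (i) if a v-type node has 3 children and two of them are leaves, the remaining child subtree's root is w-type; (ii) every w-type node with 1 child has a w-type child; (iii) every v-type node with 1 child has a leaf as child; (iv) all leaves have v-type parents lines. Then |V_v^3(θ)| ≤ 2|V_w^3(θ)| + 2|V_v^1(θ)|, where V_c^s(θ) denotes the set of internal nodes of type c with s children. -/

import Mathlib

inductive NType1 where
  | v | w
deriving DecidableEq

/-- Rooted trees whose internal nodes carry a label in {v,w}. -/
inductive LTree1 where
  | leaf : LTree1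
  | node : NType1 → (n : ℕ) → (Fin n → LTree1) → LTree1

namespace LTree1

def isLeaf : LTree1 → Prop
  | .leaf => True
  | .node _ _ _ => False

/-- The root of the subtree is an internal node of w-type. -/
def rootW : LTree1 → Prop
  | .leaf => False
  | .node c _ _ => c = .w

/-- Number of internal nodes of type `c` with exactly `s` children. -/
def cnt (c : NType1) (s : ℕ) : LTree1 → ℕ
  | .leaf => 0
  | .node c' n f => (if c' = c ∧ n = s then 1 else 0) + ∑ i : Fin n, cnt c s (f i)

/-- The well-formedness constraints (i)–(iv) together with branching numbers in {1,3}. -/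
def good : LTree1 → Prop
  | .leaf => True
  | .node c n f =>
      (n = 1 ∨ n = 3) ∧ (∀ i : Fin n, good (f i)) ∧
      -- (i) v-type with 3 children, two of which are leaves: the remaining child is w-rooted
      (c = .v → n = 3 →
        ∀ i j k : Fin n, i ≠ j → j ≠ k → i ≠ k →
          isLeaf (f i) → isLeaf (f j) → rootW (f k)) ∧
      -- (ii) w-type with one child: the child is w-rooted
      (c = .w → n = 1 → ∀ i : Fin n, rootW (f i)) ∧
      -- (iii) v-type with one child: the child is a leaf
      (c = .v → n = 1 → ∀ i : Fin n, isLeaf (f i)) ∧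
      -- (iv) leaves have v-type parents: w-type nodes have no leaf children
      (c = .w → ∀ i : Fin n, ¬ isLeaf (f i))

end LTree1


/-! Each subtree is given a credit: 0 for a leaf, 1 for a v-type node with three children and
2 for any other internal node. By induction, `cnt .v 3 t` plus the credit of `t` is at most
`2 * cnt .w 3 t + 2 * cnt .v 1 t`. At a v-type node with three children the node and its own
credit cost 2, paid by the credits of its children: at least two of them are internal nodes,
or two are leaves and, by (i), the third is w-rooted and carries credit 2. At a w-type node
with one child, the credit 2 is inherited from its child, which is w-rooted by (ii). -/

namespace LTree1

def credit : LTree1 → ℕ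
  | .leaf => 0
  | .node c n _ => if c = .v ∧ n = 3 then 1 else 2

lemma credit_eq_two_of_rootW {t : LTree1} (h : rootW t) : credit t = 2 := by
  cases t with
  | leaf => exact h.elim
  | node c n f =>
    simp only [rootW] at h
    simp [credit, h]

lemma one_le_credit_of_not_isLeaf {t : LTree1} (h : ¬ isLeaf t) : 1 ≤ credit t := by
  cases t with
  | leaf => exact absurd trivial h
  | node c n f =>
    simp only [credit]
    split_ifs <;> omega

lemma two_le_credit_add_credit_add_credit {a b c : LTree1}
    (hab : isLeaf a → isLeaf b → rootW c) (hac : isLeaf a → isLeaf c → rootW b)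
    (hbc : isLeaf b → isLeaf c → rootW a) :
    2 ≤ credit a + credit b + credit c := by
  by_cases la : isLeaf a <;> by_cases lb : isLeaf b
  · have := credit_eq_two_of_rootW (hab la lb)
    omega
  · by_cases lc : isLeaf c
    · have := credit_eq_two_of_rootW (hac la lc)
      omega
    · have := one_le_credit_of_not_isLeaf lb
      have := one_le_credit_of_not_isLeaf lc
      omega
  · by_cases lc : isLeaf c
    · have := credit_eq_two_of_rootW (hbc lb lc)
      omega
    · have := one_le_credit_of_not_isLeaf la
      have := one_le_credit_of_not_isLeaf lc
      omega
  · have := one_le_credit_of_not_isLeaf la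
    have := one_le_credit_of_not_isLeaf lb
    omega

lemma credit_node_le {c : NType1} {n : ℕ} {f : Fin n → LTree1} (h : good (.node c n f)) :
    (if c = .v ∧ n = 3 then 1 else 0) + credit (.node c n f) ≤
      2 * (if c = .w ∧ n = 3 then 1 else 0) + 2 * (if c = .v ∧ n = 1 then 1 else 0) +
        ∑ i, credit (f i) := by
  obtain ⟨hn, -, hi, hii, -, -⟩ := h
  rcases hn with rfl | rfl <;> cases c <;> simp only [credit.eq_2]
  · simp
  · simp [credit_eq_two_of_rootW (hii rfl rfl 0)]
  · have := two_le_credit_add_credit_add_credit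
      (hi rfl rfl 0 1 2 (by decide) (by decide) (by decide))
      (hi rfl rfl 0 2 1 (by decide) (by decide) (by decide))
      (hi rfl rfl 1 2 0 (by decide) (by decide) (by decide))
    simpa [Fin.sum_univ_three] using this
  · simp

theorem cnt_v_three_add_credit_le {t : LTree1} (h : good t) :
    cnt .v 3 t + credit t ≤ 2 * cnt .w 3 t + 2 * cnt .v 1 t := by
  induction t with
  | leaf => simp [cnt, credit]
  | node c n f ih =>
    have hchildren : ∑ i, (cnt .v 3 (f i) + credit (f i)) ≤
        ∑ i, (2 * cnt .w 3 (f i) + 2 * cnt .v 1 (f i)) :=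
      Finset.sum_le_sum fun i _ => ih i (h.2.1 i)
    have hroot := credit_node_le h
    simp only [cnt, Finset.sum_add_distrib, ← Finset.mul_sum] at hchildren ⊢
    omega

end LTree1

theorem v3_count_bound (t : LTree1) (h : LTree1.good t) :
    LTree1.cnt .v 3 t ≤ 2 * LTree1.cnt .w 3 t + 2 * LTree1.cnt .v 1 t :=
  le_of_add_le_left (LTree1.cnt_v_three_add_credit_le h)
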